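/- arXiv:0911.3833 — 3 statements merged into one kernel-verified Lean document; each statement's English description precedes it below -/
import Mathlib

section
/- If X is an open subset of the space of infinite subsets of ℕ (with the product topology from 2^ℕ), then there exists an infinite B ⊆ ℕ such that either all infinite subsets of B are in X or all infinite subsets of B are in the complement of X. -/
/-!
Combinatorial forcing. Fix a family `F` of finite sets. An infinite `A` accepts a finite `s` if
for every infinite `C ⊆ A` some initial segment of `s ∪ C` lies in `F`, and rejects `s` if no
infinite subset of `A` accepts it; every infinite set shrinks to one deciding finitely many given
`s`. If `A` rejects every subset of `E`, take a fusion sequence `a₀ < a₁ < ⋯` in `A` whose sets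
decide every `insert aᵢ s` with `s ⊆ E`. Some stage rejects them all: otherwise, by pigeonhole,
infinitely many `aᵢ` accept `insert aᵢ s` for one `s`, and then these `aᵢ` accept `s`. Iterating
from a set rejecting `∅` gives an infinite `N` all of whose finite subsets are rejected, hence not
in `F`, because a member of `F` lying below `A` is accepted by `A`.

For open `X`, let `F` consist of the finite `t` such that every set with initial segment `t` lies
in `X`. If `chi C ∈ X`, then `X` contains a cylinder around `chi C`, so `C ∩ [0, m]` lies in `F`
for every large enough `m ∈ C`.
-/

open Classical in
/-- The characteristic function of a set of natural numbers. -/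
noncomputable def chi (C : Set ℕ) : ℕ → Bool := fun n => if n ∈ C then true else false

open Set

namespace GalvinPrikry

def IsInitSeg (t : Finset ℕ) (C : Set ℕ) : Prop :=
  ↑t ⊆ C ∧ ∀ j ∈ t, C ∩ Iic j ⊆ t

theorem IsInitSeg.inter_Iic_eq {t : Finset ℕ} {C : Set ℕ} (h : IsInitSeg t C) {m : ℕ}
    (hm : m ∈ t) : C ∩ Iic m = ↑t ∩ Iic m :=
  Subset.antisymm (fun _ hk => ⟨h.2 m hm hk, hk.2⟩) (inter_subset_inter_left _ h.1)

theorem insert_sInf_inter_Ioi {C : Set ℕ} (hC : C.Nonempty) :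
    insert (sInf C) (C ∩ Ioi (sInf C)) = C := by
  ext k
  constructor
  · rintro (rfl | ⟨hk, -⟩)
    exacts [Nat.sInf_mem hC, hk]
  · intro hk
    rcases (Nat.sInf_le hk).eq_or_lt with h | h
    exacts [Or.inl h.symm, Or.inr ⟨hk, h⟩]

theorem _root_.Set.Infinite.inter_Ioi {A : Set ℕ} (hA : A.Infinite) (n : ℕ) :
    (A ∩ Ioi n).Infinite :=
  (hA.sdiff (finite_Iic n)).mono fun _ hk => ⟨hk.1, not_le.1 (mem_Iic.not.1 hk.2)⟩

structure IsFusionSeq (a : ℕ → ℕ) (A : ℕ → Set ℕ) : Prop where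
  mem : ∀ i, a i ∈ A i
  succ_subset : ∀ i, A (i + 1) ⊆ A i ∩ Ioi (a i)

namespace IsFusionSeq

variable {a : ℕ → ℕ} {A : ℕ → Set ℕ}

theorem antitone (h : IsFusionSeq a A) : Antitone A :=
  antitone_nat_of_succ_le fun i => (h.succ_subset i).trans inter_subset_left

theorem mem_of_le (h : IsFusionSeq a A) {i j : ℕ} (hij : i ≤ j) : a j ∈ A i :=
  h.antitone hij (h.mem j)

theorem subset_Ioi (h : IsFusionSeq a A) {i j : ℕ} (hij : i < j) : A j ⊆ Ioi (a i) :=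
  (h.antitone hij).trans ((h.succ_subset i).trans inter_subset_right)

theorem strictMono (h : IsFusionSeq a A) : StrictMono a :=
  strictMono_nat_of_lt_succ fun i => h.subset_Ioi (Nat.lt_succ_self i) (h.mem (i + 1))

end IsFusionSeq

theorem exists_isFusionSeq (P : Finset ℕ → Set ℕ → Prop) {A₀ : Set ℕ} (h₀ : P ∅ A₀)
    (hstep : ∀ E A, P E A → ∃ a ∈ A, ∃ B ⊆ A ∩ Ioi a, P (insert a E) B) :
    ∃ a A, IsFusionSeq a A ∧ A 0 = A₀ ∧ ∀ i, P ((Finset.range i).image a) (A i) := by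
  choose! next hnext shrink hshrink hP using hstep
  let S : ℕ → Finset ℕ × Set ℕ := fun i =>
    i.rec (∅, A₀) fun _ p => (insert (next p.1 p.2) p.1, shrink p.1 p.2)
  have hS : ∀ i, (S i).1 = (Finset.range i).image (fun j => next (S j).1 (S j).2) ∧
      P (S i).1 (S i).2 := by
    intro i
    induction i with
    | zero => exact ⟨rfl, h₀⟩
    | succ i ih =>
      refine ⟨?_, hP _ _ ih.2⟩
      rw [Finset.range_add_one, Finset.image_insert, ← ih.1]
  refine ⟨fun i => next (S i).1 (S i).2, fun i => (S i).2,
    ⟨fun i => hnext _ _ (hS i).2, fun i => hshrink _ _ (hS i).2⟩, rfl, fun i => ?_⟩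
  rw [← (hS i).1]
  exact (hS i).2

section Forcing

variable (F : Set (Finset ℕ))

def Accepts (s : Finset ℕ) (A : Set ℕ) : Prop :=
  ∀ C ⊆ A, C.Infinite → ∃ t ∈ F, IsInitSeg t (↑s ∪ C)

def Rejects (s : Finset ℕ) (A : Set ℕ) : Prop :=
  ∀ B ⊆ A, B.Infinite → ¬Accepts F s B

def Decides (s : Finset ℕ) (A : Set ℕ) : Prop :=
  Accepts F s A ∨ Rejects F s A

variable {F} {s E : Finset ℕ} {A B D : Set ℕ}

theorem Accepts.mono (h : Accepts F s A) (hBA : B ⊆ A) : Accepts F s B :=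
  fun C hC => h C (hC.trans hBA)

theorem Rejects.mono (h : Rejects F s A) (hBA : B ⊆ A) : Rejects F s B :=
  fun C hC => h C (hC.trans hBA)

theorem Decides.mono (h : Decides F s A) (hBA : B ⊆ A) : Decides F s B :=
  h.imp (·.mono hBA) (·.mono hBA)

theorem exists_decides (s : Finset ℕ) (hA : A.Infinite) :
    ∃ B ⊆ A, B.Infinite ∧ Decides F s B := by
  by_cases h : ∃ B ⊆ A, B.Infinite ∧ Accepts F s B
  · obtain ⟨B, hBA, hB, hacc⟩ := h
    exact ⟨B, hBA, hB, Or.inl hacc⟩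
  · push Not at h
    exact ⟨A, subset_rfl, hA, Or.inr h⟩

theorem exists_decides_forall_mem (S : Finset (Finset ℕ)) (hA : A.Infinite) :
    ∃ B ⊆ A, B.Infinite ∧ ∀ s ∈ S, Decides F s B := by
  induction S using Finset.induction_on generalizing A with
  | empty => exact ⟨A, subset_rfl, hA, by simp⟩
  | insert s S _ ih =>
    obtain ⟨B, hBA, hB, hS⟩ := ih hA
    obtain ⟨B', hB'B, hB', hs⟩ := exists_decides (F := F) s hB
    exact ⟨B', hB'B.trans hBA, hB',
      (Finset.forall_mem_insert _ _ _).2 ⟨hs, fun t ht => (hS t ht).mono hB'B⟩⟩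

theorem accepts_of_mem (hs : s ∈ F) (hA : ∀ a ∈ A, ∀ j ∈ s, j < a) : Accepts F s A :=
  fun _ hCA _ => ⟨s, hs, subset_union_left, fun j hj k ⟨hk, hkj⟩ =>
    hk.elim id fun hkC => absurd hkj (not_le.2 (hA k (hCA hkC) j hj))⟩

theorem accepts_of_forall_accepts_insert (h : ∀ a ∈ D, Accepts F (insert a s) (D ∩ Ioi a)) :
    Accepts F s D := by
  intro C hCD hC
  obtain ⟨t, htF, ht⟩ := h _ (hCD (Nat.sInf_mem hC.nonempty)) (C ∩ Ioi (sInf C))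
    (inter_subset_inter_left _ hCD) (hC.inter_Ioi _)
  rw [Finset.coe_insert, insert_union, ← union_insert, insert_sInf_inter_Ioi hC.nonempty] at ht
  exact ⟨t, htF, ht⟩

theorem IsFusionSeq.accepts_image {b : ℕ → ℕ} {B : ℕ → Set ℕ} (hbB : IsFusionSeq b B)
    {I : Set ℕ} (hI : ∀ i ∈ I, Accepts F (insert (b i) s) (B (i + 1))) : Accepts F s (b '' I) := by
  refine accepts_of_forall_accepts_insert ?_
  rintro _ ⟨i, hi, rfl⟩
  refine (hI i hi).mono ?_
  rintro _ ⟨⟨j, -, rfl⟩, hij⟩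
  exact hbB.mem_of_le (hbB.strictMono.lt_iff_lt.1 hij)

theorem exists_decides_insert (hA : A.Infinite) (E : Finset ℕ) :
    ∃ a ∈ A, ∃ B ⊆ A ∩ Ioi a, B.Infinite ∧ ∀ s ⊆ E, Decides F (insert a s) B := by
  obtain ⟨a, ha⟩ := hA.nonempty
  obtain ⟨B, hBA, hB, hdec⟩ :=
    exists_decides_forall_mem (F := F) (E.powerset.image (insert a)) (hA.inter_Ioi a)
  exact ⟨a, ha, B, hBA, hB, fun s hs =>
    hdec _ (Finset.mem_image_of_mem _ (Finset.mem_powerset.2 hs))⟩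

theorem IsFusionSeq.exists_accepts_image {b : ℕ → ℕ} {B : ℕ → Set ℕ} (hbB : IsFusionSeq b B)
    (h : ∀ i, ∃ s ⊆ E, Accepts F (insert (b i) s) (B (i + 1))) :
    ∃ s ⊆ E, ∃ I : Set ℕ, I.Infinite ∧ Accepts F s (b '' I) := by
  choose s hsE hs using h
  let f (i : ℕ) : E.powerset := ⟨s i, Finset.mem_powerset.2 (hsE i)⟩
  obtain ⟨⟨s₀, hs₀⟩, hI⟩ := Finite.exists_infinite_fiber f
  refine ⟨s₀, Finset.mem_powerset.1 hs₀, _, infinite_coe_iff.1 hI,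
    hbB.accepts_image fun i hi => ?_⟩
  rw [← show s i = s₀ from congrArg Subtype.val hi]
  exact hs i

theorem exists_rejects_insert (hA : A.Infinite) (hrej : ∀ s ⊆ E, Rejects F s A) :
    ∃ a ∈ A, ∃ B ⊆ A ∩ Ioi a, B.Infinite ∧ ∀ s ⊆ E, Rejects F (insert a s) B := by
  obtain ⟨b, B, hbB, hB₀, hP⟩ := exists_isFusionSeq
    (fun D B => B.Infinite ∧ ∀ a ∈ D, ∀ s ⊆ E, Decides F (insert a s) B) ⟨hA, by simp⟩ <| by
      rintro D B ⟨hB, hdec⟩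
      obtain ⟨a, ha, B', hB'B, hB', hB'dec⟩ := exists_decides_insert (F := F) hB E
      exact ⟨a, ha, B', hB'B, hB', (Finset.forall_mem_insert _ _ _).2
        ⟨hB'dec, fun c hc s hs => (hdec c hc s hs).mono (hB'B.trans inter_subset_left)⟩⟩
  have hBA (i : ℕ) : B i ⊆ A := hB₀ ▸ hbB.antitone (Nat.zero_le i)
  by_cases h : ∃ i, ∀ s ⊆ E, Rejects F (insert (b i) s) (B (i + 1))
  · obtain ⟨i, hi⟩ := h
    exact ⟨b i, hBA i (hbB.mem i), B (i + 1),
      (hbB.succ_subset i).trans (inter_subset_inter_left _ (hBA i)), (hP (i + 1)).1, hi⟩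
  have hacc (i : ℕ) : ∃ s ⊆ E, Accepts F (insert (b i) s) (B (i + 1)) := by
    push Not at h
    obtain ⟨s, hsE, hs⟩ := h i
    have hbi : b i ∈ (Finset.range (i + 1)).image b :=
      Finset.mem_image_of_mem b (Finset.self_mem_range_succ i)
    exact ⟨s, hsE, ((hP (i + 1)).2 (b i) hbi s hsE).resolve_right hs⟩
  obtain ⟨s, hsE, I, hI, hs⟩ := hbB.exists_accepts_image hacc
  refine absurd hs (hrej s hsE _ ?_ (hI.image hbB.strictMono.injective.injOn))
  rintro _ ⟨i, -, rfl⟩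
  exact hBA i (hbB.mem i)

theorem rejects_of_subset_insert {a : ℕ} (hE : ∀ s ⊆ E, Rejects F s A) (hBA : B ⊆ A)
    (ha : ∀ s ⊆ E, Rejects F (insert a s) B) : ∀ s ⊆ insert a E, Rejects F s B := by
  intro s hs
  rw [Finset.subset_insert_iff] at hs
  by_cases has : a ∈ s
  · rw [← Finset.insert_erase has]
    exact ha _ hs
  · rw [Finset.erase_eq_of_notMem has] at hs
    exact (hE s hs).mono hBA

theorem exists_subset_image_range {a : ℕ → ℕ} {s : Finset ℕ} (hs : (↑s : Set ℕ) ⊆ range a) :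
    ∃ i, s ⊆ (Finset.range i).image a := by
  rw [← image_univ, Finset.subset_set_image_iff] at hs
  obtain ⟨T, -, rfl⟩ := hs
  obtain ⟨i, hi⟩ := T.exists_nat_subset_range
  exact ⟨i, Finset.image_subset_image hi⟩

theorem exists_infinite_of_rejects_empty (hA : A.Infinite) (hrej : Rejects F ∅ A) :
    ∃ N : Set ℕ, N.Infinite ∧ ∀ s ∈ F, ¬(↑s : Set ℕ) ⊆ N := by
  obtain ⟨a, B, haB, -, hP⟩ := exists_isFusionSeq
    (fun E B => B.Infinite ∧ ∀ s ⊆ E, Rejects F s B) ⟨hA, by simpa⟩ <| by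
      rintro E B ⟨hB, hE⟩
      obtain ⟨a, ha, B', hB'B, hB', hrej'⟩ := exists_rejects_insert hB hE
      exact ⟨a, ha, B', hB'B, hB', rejects_of_subset_insert hE (hB'B.trans inter_subset_left) hrej'⟩
  refine ⟨range a, infinite_range_of_injective haB.strictMono.injective, fun s hsF hsN => ?_⟩
  obtain ⟨i, hi⟩ := exists_subset_image_range hsN
  refine (hP i).2 s hi (B i) subset_rfl (hP i).1 (accepts_of_mem hsF fun x hx j hj => ?_)
  obtain ⟨k, hk, rfl⟩ := Finset.mem_image.1 (hi hj)
  exact haB.subset_Ioi (Finset.mem_range.1 hk) hx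

theorem galvin (F : Set (Finset ℕ)) :
    ∃ N : Set ℕ, N.Infinite ∧
      ((∀ C ⊆ N, C.Infinite → ∃ t ∈ F, IsInitSeg t C) ∨ ∀ s ∈ F, ¬(↑s : Set ℕ) ⊆ N) := by
  obtain ⟨B, -, hB, hacc | hrej⟩ := exists_decides (F := F) ∅ infinite_univ
  · exact ⟨B, hB, Or.inl fun C hCB hC => by simpa using hacc C hCB hC⟩
  · obtain ⟨N, hN, hNF⟩ := exists_infinite_of_rejects_empty hB hrej
    exact ⟨N, hN, Or.inr hNF⟩

end Forcing

theorem exists_cylinder_subset {E : ℕ → Type*} [∀ n, TopologicalSpace (E n)]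
    [∀ n, DiscreteTopology (E n)] {X : Set (∀ n, E n)} (hX : IsOpen X) {x : ∀ n, E n}
    (hx : x ∈ X) : ∃ n, PiNat.cylinder x n ⊆ X := by
  obtain ⟨_, ⟨y, n, rfl⟩, hxy, hsub⟩ :=
    (PiNat.isTopologicalBasis_cylinders E).exists_subset_of_mem_open hx hX
  exact ⟨n, PiNat.mem_cylinder_iff_eq.1 hxy ▸ hsub⟩

end GalvinPrikry

/-- The open case of the Galvin–Prikry theorem: open subsets of the space of infinite
subsets of ℕ (identified with characteristic functions in `2^ℕ` with the product topology)
are Ramsey. -/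
theorem galvin_prikry_open (X : Set (ℕ → Bool)) (hX : IsOpen X) :
    ∃ B : Set ℕ, B.Infinite ∧
      ((∀ C : Set ℕ, C ⊆ B → C.Infinite → chi C ∈ X) ∨
        (∀ C : Set ℕ, C ⊆ B → C.Infinite → chi C ∉ X)) := by
  obtain ⟨N, hN, hNX | hNX⟩ :=
    GalvinPrikry.galvin {t | ∀ D, GalvinPrikry.IsInitSeg t D → chi D ∈ X}
  · exact ⟨N, hN, Or.inl fun C hCN hC => by
      obtain ⟨t, ht, htC⟩ := hNX C hCN hC
      exact ht C htC⟩
  refine ⟨N, hN, Or.inr fun C hCN hC hCX => ?_⟩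
  obtain ⟨n, hn⟩ := GalvinPrikry.exists_cylinder_subset hX hCX
  obtain ⟨m, hmC, hnm⟩ := hC.exists_gt n
  have hfin : (C ∩ Iic m).Finite := (finite_Iic m).inter_of_right C
  refine hNX hfin.toFinset (fun D hD => hn (PiNat.mem_cylinder_iff.2 fun i hi => ?_))
    (by simp [inter_subset_left.trans hCN])
  have hDC := hD.inter_Iic_eq (hfin.mem_toFinset.2 ⟨hmC, mem_Iic.2 le_rfl⟩)
  rw [hfin.coe_toFinset, inter_assoc, inter_self] at hDC
  have hiDC : i ∈ D ↔ i ∈ C := by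
    simpa [hi.le.trans hnm.le] using congrArg (i ∈ ·) hDC
  simp [chi, hiDC]
end

section
/- Let (R, ≤, r) be metrically closed and satisfy axioms A.1–A.6 of topological Ramsey space theory. Then for all k, s ∈ ℕ, every A ∈ R, and every coloring c : AR_k → s, there exists B ≤ A such that c is constant on AR_k(B), the set of k-th approximations of elements C ≤ B. -/
/-- A triple `(R, ≤, r)`: a set `R`, a quasi-order `≤` on it, and an approximation
function `r : ℕ × R → AR` with range `AR`, together with a finitization quasi-order
`≤_fin` on `AR`. -/
structure RSpace where
  R : Type
  AR : Type
  le : R → R → Prop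
  le_refl : ∀ A, le A A
  le_trans : ∀ A B C, le A B → le B C → le A C
  r : ℕ → R → AR
  lefin : AR → AR → Prop
  lefin_refl : ∀ a, lefin a a
  lefin_trans : ∀ a b c, lefin a b → lefin b c → lefin a c
  r_surj : ∀ a : AR, ∃ n A, r n A = a

namespace RSpace

variable (S : RSpace)

/-- The Ellentuck neighborhood `[a, A] = {B ≤ A : ∃ n, r_n(B) = a}`. -/
def nbhd (a : S.AR) (A : S.R) : Set S.R := {B | S.le B A ∧ ∃ n, S.r n B = a}

/-- `AR(A) = {a ∈ AR : [a, A] ≠ ∅}`. -/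
def ARof (A : S.R) : Set S.AR := {a | (S.nbhd a A).Nonempty}

/-- `depth_A(a) = n`: `n` is least with `a ≤_fin r_n(A)`. -/
def IsDepth (A : S.R) (a : S.AR) (n : ℕ) : Prop :=
  S.lefin a (S.r n A) ∧ ∀ i < n, ¬ S.lefin a (S.r i A)

/-- (A.1) `r_0(A) = ∅` for all `A`. -/
def A1 : Prop := ∀ A B, S.r 0 A = S.r 0 B

/-- (A.2) distinct elements have some distinct approximation. -/
def A2 : Prop := ∀ A B, A ≠ B → ∃ n, S.r n A ≠ S.r n B

/-- (A.3) `r_n(A) = r_m(B)` implies `n = m` and `r_i(A) = r_i(B)` for all `i < n`. -/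
def A3 : Prop := ∀ A B n m, S.r n A = S.r m B → n = m ∧ ∀ i < n, S.r i A = S.r i B

/-- (A.4)(i) finitization: `A ≤ B` iff every approximation of `A` is `≤_fin` some
approximation of `B`. -/
def A4i : Prop := ∀ A B, S.le A B ↔ ∀ n, ∃ m, S.lefin (S.r n A) (S.r m B)

/-- (A.4)(ii) each `≤_fin`-downward cone is finite. -/
def A4ii : Prop := ∀ a : S.AR, {b | S.lefin b a}.Finite

/-- (A.5) amalgamation. -/
def A5 : Prop := ∀ (a : S.AR) (A : S.R) (n : ℕ), S.IsDepth A a n →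
  (∀ B ∈ S.nbhd (S.r n A) A, (S.nbhd a B).Nonempty) ∧
  (∀ B ∈ S.nbhd a A, ∃ A' ∈ S.nbhd (S.r n A) A, S.nbhd a A' ⊆ S.nbhd a B)

/-- (A.6) abstract pigeonhole: if `depth_A(a) = n` and `|a| = l`, then for every
`O ⊆ AR` there is `B ∈ [n, A]` with `r_{l+1}[a, B] ⊆ O` or `r_{l+1}[a, B] ⊆ Oᶜ`. -/
def A6 : Prop := ∀ (a : S.AR) (A : S.R) (n l : ℕ), S.IsDepth A a n →
  (∃ C, S.r l C = a) →
  ∀ O : Set S.AR, ∃ B ∈ S.nbhd (S.r n A) A,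
    (∀ b : S.AR, (∃ C ∈ S.nbhd a B, S.r (l + 1) C = b) → b ∈ O) ∨
    (∀ b : S.AR, (∃ C ∈ S.nbhd a B, S.r (l + 1) C = b) → b ∉ O)

/-- `R` is metrically closed as a subspace of `AR^ℕ` (identifying each `A ∈ R` with its
sequence of approximations): every sequence of approximations all of whose initial
segments come from elements of `R` is itself the approximation sequence of an element. -/
def MetricallyClosed : Prop :=
  ∀ f : ℕ → S.AR, (∀ n, ∃ A, ∀ i ≤ n, S.r i A = f i) → ∃ A, ∀ n, S.r n A = f n

/-- `(R, ≤, r)` is metrically closed and satisfies axioms (A.1)–(A.6). -/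
def Axioms : Prop :=
  S.A1 ∧ S.A2 ∧ S.A3 ∧ S.A4i ∧ S.A4ii ∧ S.A5 ∧ S.A6 ∧ S.MetricallyClosed

end RSpace

/-!
Fusion: at stage `n`, the finitely many `a ≤_fin r_n(B)` of depth `n` (A.4(ii)) are treated one
after another, each colour of their one-step extensions being decided by the pigeonhole principle
(A.6) while `r_n(B)` is kept fixed. Metric closedness yields a limit `D` on which the colour of
`r_{k+1}(C)` depends only on `r_k(C)`; induction on `k` then homogenizes this induced colouring
of `AR_k`, the case `k = 0` being trivial by (A.1).
-/

namespace RSpace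

variable {S : RSpace}

theorem mem_nbhd_r_self (n : ℕ) (B : S.R) : B ∈ S.nbhd (S.r n B) B :=
  ⟨S.le_refl B, n, rfl⟩

theorem nbhd_mono {a : S.AR} {B B' : S.R} (h : S.le B B') : S.nbhd a B ⊆ S.nbhd a B' :=
  fun _ hC => ⟨S.le_trans _ _ _ hC.1 h, hC.2⟩

theorem r_eq_of_mem_nbhd_r (h3 : S.A3) {B B' : S.R} {n : ℕ} (h : B' ∈ S.nbhd (S.r n B) B)
    {i : ℕ} (hi : i ≤ n) : S.r i B' = S.r i B := by
  obtain ⟨-, m, hm⟩ := h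
  obtain ⟨rfl, hlt⟩ := h3 B' B m n hm
  rcases hi.eq_or_lt with rfl | hi
  · exact hm
  · exact hlt i hi

theorem mem_nbhd_r_of_le (h3 : S.A3) {B B' : S.R} {m n : ℕ} (h : B' ∈ S.nbhd (S.r m B) B)
    (hnm : n ≤ m) : B' ∈ S.nbhd (S.r n B) B :=
  ⟨h.1, n, r_eq_of_mem_nbhd_r h3 h hnm⟩

theorem mem_nbhd_r_trans (h3 : S.A3) {B₀ B₁ B₂ : S.R} {n : ℕ}
    (h₁ : B₁ ∈ S.nbhd (S.r n B₀) B₀) (h₂ : B₂ ∈ S.nbhd (S.r n B₁) B₁) :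
    B₂ ∈ S.nbhd (S.r n B₀) B₀ :=
  ⟨S.le_trans _ _ _ h₂.1 h₁.1, n,
    (r_eq_of_mem_nbhd_r h3 h₂ le_rfl).trans (r_eq_of_mem_nbhd_r h3 h₁ le_rfl)⟩

theorem isDepth_congr {B B' : S.R} {a : S.AR} {n : ℕ} (h : ∀ i ≤ n, S.r i B' = S.r i B) :
    S.IsDepth B' a n ↔ S.IsDepth B a n := by
  unfold IsDepth
  rw [h n le_rfl]
  exact and_congr_right' (forall₂_congr fun i hi => by rw [h i hi.le])

theorem exists_isDepth {a : S.AR} {B : S.R} (h : ∃ j, S.lefin a (S.r j B)) :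
    ∃ n, S.IsDepth B a n := by
  classical
  exact ⟨Nat.find h, Nat.find_spec h, fun _ hi => Nat.find_min h hi⟩

theorem exists_mem_nbhd_r_forall_mem_finset (h3 : S.A3) {ι : Type*} (T : Finset ι)
    (P : ι → S.R → Prop) (n : ℕ) (hhered : ∀ i B B', B' ∈ S.nbhd (S.r n B) B → P i B → P i B')
    (hdense : ∀ i B, ∃ B' ∈ S.nbhd (S.r n B) B, P i B') (B : S.R) :
    ∃ B' ∈ S.nbhd (S.r n B) B, ∀ i ∈ T, P i B' := by
  classical
  induction T using Finset.induction_on generalizing B with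
  | empty => exact ⟨B, mem_nbhd_r_self n B, by simp⟩
  | insert i T _ ih =>
    obtain ⟨B₁, hB₁, hi⟩ := hdense i B
    obtain ⟨B₂, hB₂, hT⟩ := ih B₁
    refine ⟨B₂, mem_nbhd_r_trans h3 hB₁ hB₂, ?_⟩
    simp only [Finset.mem_insert, forall_eq_or_imp]
    exact ⟨hhered i _ _ hB₂ hi, hT⟩

theorem exists_mem_nbhd_r_subsingleton_color (h3 : S.A3) (h6 : S.A6) {ι : Type*} [Finite ι]
    (c : S.AR → ι) {a : S.AR} {l : ℕ} (ha : ∃ C, S.r l C = a) (n : ℕ) (B : S.R) :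
    ∃ B' ∈ S.nbhd (S.r n B) B,
      S.IsDepth B' a n → ((c ∘ S.r (l + 1)) '' S.nbhd a B').Subsingleton := by
  have := Fintype.ofFinite ι
  let P : ι → S.R → Prop := fun i B' => S.IsDepth B' a n →
    (∀ C ∈ S.nbhd a B', c (S.r (l + 1) C) = i) ∨ (∀ C ∈ S.nbhd a B', c (S.r (l + 1) C) ≠ i)
  have hereditary : ∀ i B₀ B₁, B₁ ∈ S.nbhd (S.r n B₀) B₀ → P i B₀ → P i B₁ := by
    intro i B₀ B₁ hB₁ hdec hd
    rcases hdec ((isDepth_congr fun _ hj => r_eq_of_mem_nbhd_r h3 hB₁ hj).mp hd) with hall | hnone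
    · exact .inl fun C hC => hall C (nbhd_mono hB₁.1 hC)
    · exact .inr fun C hC => hnone C (nbhd_mono hB₁.1 hC)
  have dense : ∀ i B₀, ∃ B₁ ∈ S.nbhd (S.r n B₀) B₀, P i B₁ := by
    intro i B₀
    by_cases hd : S.IsDepth B₀ a n
    · obtain ⟨B₁, hB₁, hin | hout⟩ := h6 a B₀ n l hd ha {b | c b = i}
      · exact ⟨B₁, hB₁, fun _ => .inl fun C hC => hin _ ⟨C, hC, rfl⟩⟩
      · exact ⟨B₁, hB₁, fun _ => .inr fun C hC => hout _ ⟨C, hC, rfl⟩⟩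
    · exact ⟨B₀, mem_nbhd_r_self n B₀, fun hd' => absurd hd' hd⟩
  obtain ⟨B', hB', hdecided⟩ :=
    exists_mem_nbhd_r_forall_mem_finset h3 Finset.univ P n hereditary dense B
  refine ⟨B', hB', fun hd => ?_⟩
  rintro _ ⟨C₁, hC₁, rfl⟩ _ ⟨C₂, hC₂, rfl⟩
  rcases hdecided (c (S.r (l + 1) C₁)) (Finset.mem_univ _) hd with hall | hnone
  · exact (hall C₂ hC₂).symm
  · exact absurd rfl (hnone C₁ hC₁)

theorem exists_mem_nbhd_r_forall_isDepth_subsingleton_color (h3 : S.A3) (h4ii : S.A4ii)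
    (h6 : S.A6) {ι : Type*} [Finite ι] (c : S.AR → ι) (k n : ℕ) (B : S.R) :
    ∃ B' ∈ S.nbhd (S.r n B) B, ∀ a, S.IsDepth B' a n → (∃ C, S.r k C = a) →
      ((c ∘ S.r (k + 1)) '' S.nbhd a B').Subsingleton := by
  let P : S.AR → S.R → Prop := fun a B' => S.IsDepth B' a n → (∃ C, S.r k C = a) →
    ((c ∘ S.r (k + 1)) '' S.nbhd a B').Subsingleton
  have hereditary : ∀ a B₀ B₁, B₁ ∈ S.nbhd (S.r n B₀) B₀ → P a B₀ → P a B₁ := by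
    intro a B₀ B₁ hB₁ hsub hd ha
    exact (hsub ((isDepth_congr fun _ hj => r_eq_of_mem_nbhd_r h3 hB₁ hj).mp hd) ha).anti
      (Set.image_mono (nbhd_mono hB₁.1))
  have dense : ∀ a B₀, ∃ B₁ ∈ S.nbhd (S.r n B₀) B₀, P a B₁ := by
    intro a B₀
    by_cases ha : ∃ C, S.r k C = a
    · obtain ⟨B₁, hB₁, h⟩ := exists_mem_nbhd_r_subsingleton_color h3 h6 c ha n B₀
      exact ⟨B₁, hB₁, fun hd _ => h hd⟩
    · exact ⟨B₀, mem_nbhd_r_self n B₀, fun _ ha' => absurd ha' ha⟩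
  obtain ⟨B', hB', hcone⟩ := exists_mem_nbhd_r_forall_mem_finset h3 (h4ii (S.r n B)).toFinset
    P n hereditary dense B
  refine ⟨B', hB', fun a hd ha => hcone a ?_ hd ha⟩
  rw [Set.Finite.mem_toFinset, Set.mem_ofPred_eq, ← r_eq_of_mem_nbhd_r h3 hB' le_rfl]
  exact hd.1

theorem exists_limit_of_fusion_sequence (h3 : S.A3) (h4i : S.A4i) (hmc : S.MetricallyClosed)
    (B : ℕ → S.R) (hB : ∀ n, B (n + 1) ∈ S.nbhd (S.r n (B n)) (B n)) :
    ∃ D, ∀ n, S.le D (B n) ∧ ∀ i ≤ n, S.r i D = S.r i (B n) := by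
  have hmem : ∀ n m, n ≤ m → B m ∈ S.nbhd (S.r n (B n)) (B n) := by
    intro n m hnm
    induction m, hnm using Nat.le_induction with
    | base => exact mem_nbhd_r_self n (B n)
    | succ m hnm ih => exact mem_nbhd_r_trans h3 ih (mem_nbhd_r_of_le h3 (hB m) hnm)
  have hstable : ∀ n, ∀ i ≤ n, S.r i (B n) = S.r i (B i) := fun n i hi =>
    r_eq_of_mem_nbhd_r h3 (hmem i n hi) le_rfl
  obtain ⟨D, hD⟩ := hmc (fun i => S.r i (B i)) fun n => ⟨B n, hstable n⟩
  have hagree : ∀ n, ∀ i ≤ n, S.r i D = S.r i (B n) := fun n i hi =>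
    (hD i).trans (hstable n i hi).symm
  refine ⟨D, fun n => ⟨(h4i D (B n)).mpr fun m => ?_, hagree n⟩⟩
  have hfin := (h4i _ _).mp (hmem n (max n m) (le_max_left n m)).1 m
  rwa [← hagree _ m (le_max_right n m)] at hfin

theorem exists_le_fusion (h3 : S.A3) (h4i : S.A4i) (hmc : S.MetricallyClosed)
    (Q : ℕ → S.R → Prop) (hQ : ∀ n B, ∃ B' ∈ S.nbhd (S.r n B) B, Q n B') (A : S.R) :
    ∃ D, S.le D A ∧ ∀ n, ∃ B, Q n B ∧ S.le D B ∧ ∀ i ≤ n, S.r i D = S.r i B := by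
  choose next hnext hQnext using hQ
  let B : ℕ → S.R := fun n => Nat.rec A (fun n Bn => next n Bn) n
  obtain ⟨D, hD⟩ := exists_limit_of_fusion_sequence h3 h4i hmc B fun n => hnext n (B n)
  exact ⟨D, (hD 0).1, fun n => ⟨B (n + 1), hQnext n (B n), (hD (n + 1)).1,
    fun i hi => (hD (n + 1)).2 i (by omega)⟩⟩

theorem exists_le_forall_subsingleton_color (h3 : S.A3) (h4i : S.A4i) (h4ii : S.A4ii)
    (h6 : S.A6) (hmc : S.MetricallyClosed) {ι : Type*} [Finite ι] (c : S.AR → ι) (k : ℕ)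
    (A : S.R) :
    ∃ D, S.le D A ∧ ∀ C, S.le C D →
      ((c ∘ S.r (k + 1)) '' S.nbhd (S.r k C) D).Subsingleton := by
  obtain ⟨D, hDA, hD⟩ := exists_le_fusion h3 h4i hmc _
    (exists_mem_nbhd_r_forall_isDepth_subsingleton_color h3 h4ii h6 c k) A
  refine ⟨D, hDA, fun C hCD => ?_⟩
  obtain ⟨n, hn⟩ := exists_isDepth ((h4i C D).mp hCD k)
  obtain ⟨B, hB, hDB, hagree⟩ := hD n
  exact (hB _ ((isDepth_congr hagree).mp hn) ⟨C, rfl⟩).anti (Set.image_mono (nbhd_mono hDB))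

end RSpace

/-- Abstract version of Ramsey's theorem: every finite coloring of `AR_k` is constant on
`AR_k(B) = {r_k(C) : C ≤ B}` for some `B ≤ A`. -/
theorem abstract_ramsey (S : RSpace) (hS : S.Axioms) (k s : ℕ) (A : S.R)
    (c : S.AR → Fin s) :
    ∃ B : S.R, S.le B A ∧
      ∀ a₁ a₂ : S.AR, (∃ C, S.le C B ∧ S.r k C = a₁) → (∃ C, S.le C B ∧ S.r k C = a₂) →
        c a₁ = c a₂ := by
  obtain ⟨h1, -, h3, h4i, h4ii, -, h6, hmc⟩ := hS
  induction k generalizing A c with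
  | zero =>
    refine ⟨A, S.le_refl A, ?_⟩
    rintro _ _ ⟨C₁, -, rfl⟩ ⟨C₂, -, rfl⟩
    rw [h1 C₁ C₂]
  | succ k ih =>
    obtain ⟨D, hDA, hD⟩ := RSpace.exists_le_forall_subsingleton_color h3 h4i h4ii h6 hmc c k A
    have : Nonempty S.R := ⟨A⟩
    let c' : S.AR → Fin s := fun a => c (S.r (k + 1) (Classical.epsilon (· ∈ S.nbhd a D)))
    have hc' : ∀ C, S.le C D → c (S.r (k + 1) C) = c' (S.r k C) := fun C hCD =>
      hD C hCD ⟨C, ⟨hCD, k, rfl⟩, rfl⟩ ⟨_, Classical.epsilon_spec ⟨C, hCD, k, rfl⟩, rfl⟩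
    obtain ⟨B, hBD, hB⟩ := ih D c'
    refine ⟨B, S.le_trans B D A hBD hDA, ?_⟩
    rintro _ _ ⟨C₁, hC₁, rfl⟩ ⟨C₂, hC₂, rfl⟩
    rw [hc' C₁ (S.le_trans _ _ _ hC₁ hBD), hc' C₂ (S.le_trans _ _ _ hC₂ hBD)]
    exact hB _ _ ⟨C₁, hC₁, rfl⟩ ⟨C₂, hC₂, rfl⟩
end

section
/- Let (R, ≤, r) be metrically closed and satisfy axioms A.1–A.6 of topological Ramsey space theory. Then for all k, n, s ∈ ℕ and A ∈ R, there exists m ∈ ℕ such that for every coloring c : AR_k^m(A) → s there exists b ∈ AR_n^m(A) such that c is constant on AR_k^m(A, b) = {a ∈ AR_k^m(A) : a ≤_fin b}. -/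
/-!
First the infinite pigeonhole for approximations: for every finite colouring of `AR` and every
`A` there is `B ≤ A` on which `AR_k(B)` is monochromatic. For `k = 0` this is (A.1). For `k + 1`,
apply (A.6) to each of the finitely many (A.4)(ii) approximations of depth `d`, at every stage `d`
of a fusion sequence; its limit (metric closedness) is some `L ≤ A` on which `r_{k+1}[a, L]` is
decided for every `a ∈ AR_k(L)`, and the induction hypothesis is applied to that decision.

The finite version follows by compactness. If every `m` had a bad colouring `c_m`, colour each
`a` by `c_{depth_A(a)}(a)` and take `B ≤ A` homogeneous for it. With `b = r_n(B)` and
`m = depth_A(b)`, (A.5) puts every `a ∈ AR_k^m(A)` with `a ≤_fin b` into `AR_k(B)`, so `c_m` is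
constant there after all.
-/

namespace RSpace

section Defs

variable (S : RSpace)

def ARk (k : ℕ) (B : S.R) : Set S.AR := {a | ∃ C, S.le C B ∧ S.r k C = a}

/-- `r_{l+1}[a, B]`. -/
def extensions (l : ℕ) (a : S.AR) (B : S.R) : Set S.AR :=
  {b | ∃ C ∈ S.nbhd a B, S.r (l + 1) C = b}

/-- `depth_A(a)`; it is `0` (as `sInf ∅`) when `a` lies below no approximation of `A`. -/
noncomputable def depth (A : S.R) (a : S.AR) : ℕ := sInf {d | S.lefin a (S.r d A)}

end Defs

variable {S : RSpace}

theorem r_mem_ARk (k : ℕ) (B : S.R) : S.r k B ∈ S.ARk k B := ⟨B, S.le_refl B, rfl⟩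

theorem ARk_mono {k : ℕ} {B B' : S.R} (h : S.le B B') : S.ARk k B ⊆ S.ARk k B' := by
  rintro _ ⟨C, hC, rfl⟩
  exact ⟨C, S.le_trans _ _ _ hC h, rfl⟩

theorem extensions_mono {l : ℕ} {a : S.AR} {B B' : S.R} (h : S.le B B') :
    S.extensions l a B ⊆ S.extensions l a B' := by
  rintro _ ⟨C, ⟨hC, hCa⟩, rfl⟩
  exact ⟨C, ⟨S.le_trans _ _ _ hC h, hCa⟩, rfl⟩

theorem r_eq_of_r_eq_of_le (hA3 : S.A3) {X Y : S.R} {n j : ℕ} (h : S.r n X = S.r n Y)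
    (hj : j ≤ n) :
    S.r j X = S.r j Y := by
  rcases hj.eq_or_lt with rfl | hj
  · exact h
  · exact (hA3 X Y n n h).2 j hj

theorem IsDepth.congr {X Y : S.R} {a : S.AR} {d : ℕ} (h : ∀ j ≤ d, S.r j X = S.r j Y)
    (hd : S.IsDepth X a d) : S.IsDepth Y a d :=
  ⟨h d le_rfl ▸ hd.1, fun i hi => h i hi.le ▸ hd.2 i hi⟩

theorem isDepth_depth {A : S.R} {a : S.AR} {d : ℕ} (h : S.lefin a (S.r d A)) :
    S.IsDepth A a (S.depth A a) :=
  ⟨Nat.sInf_mem (s := {d | S.lefin a (S.r d A)}) ⟨d, h⟩, fun _ hi hi' => (Nat.sInf_le hi').not_gt hi⟩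

theorem IsDepth.depth_eq {A : S.R} {a : S.AR} {m : ℕ} (h : S.IsDepth A a m) :
    S.depth A a = m :=
  le_antisymm (Nat.sInf_le h.1) (not_lt.1 fun hlt => h.2 _ hlt (isDepth_depth h.1).1)

theorem exists_extensions_subset_or_subset_compl (hA3 : S.A3) (hA6 : S.A6) {a : S.AR}
    {E : S.R} {i l : ℕ} (hd : S.IsDepth E a i) (hl : ∃ C, S.r l C = a) (O : Set S.AR) :
    ∃ E', S.le E' E ∧ S.r i E' = S.r i E ∧
      (S.extensions l a E' ⊆ O ∨ S.extensions l a E' ⊆ Oᶜ) := by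
  obtain ⟨E', ⟨hle, j, hj⟩, hO⟩ := hA6 a E i l hd hl O
  obtain rfl := (hA3 E' E j i hj).1
  exact ⟨E', hle, hj, hO⟩

theorem exists_le_extensions_decided_finset (hA3 : S.A3) (hA6 : S.A6) (l : ℕ) (O : Set S.AR)
    (i : ℕ) (B : S.R) (F : Finset S.AR) :
    ∃ B', S.le B' B ∧ S.r i B' = S.r i B ∧ ∀ a ∈ F, S.IsDepth B a i → (∃ C, S.r l C = a) →
      S.extensions l a B' ⊆ O ∨ S.extensions l a B' ⊆ Oᶜ := by
  classical
  induction F using Finset.induction_on with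
  | empty => exact ⟨B, S.le_refl B, rfl, by simp⟩
  | insert a F _ ih =>
    obtain ⟨B₁, hB₁, hrB₁, hF⟩ := ih
    have hF' : ∀ B', S.le B' B₁ → ∀ a ∈ F, S.IsDepth B a i → (∃ C, S.r l C = a) →
        S.extensions l a B' ⊆ O ∨ S.extensions l a B' ⊆ Oᶜ := fun B' hB' a ha hd hl =>
      (hF a ha hd hl).imp (extensions_mono hB').trans (extensions_mono hB').trans
    by_cases ha : S.IsDepth B a i ∧ ∃ C, S.r l C = a
    · have hd : S.IsDepth B₁ a i :=
        ha.1.congr fun j hj => (r_eq_of_r_eq_of_le hA3 hrB₁ hj).symm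
      obtain ⟨B₂, hB₂, hrB₂, hO⟩ := exists_extensions_subset_or_subset_compl hA3 hA6 hd ha.2 O
      refine ⟨B₂, S.le_trans _ _ _ hB₂ hB₁, hrB₂.trans hrB₁, fun a' ha' => ?_⟩
      rcases Finset.mem_insert.1 ha' with rfl | ha'
      · exact fun _ _ => hO
      · exact hF' B₂ hB₂ a' ha'
    · refine ⟨B₁, hB₁, hrB₁, fun a' ha' hd hl => ?_⟩
      rcases Finset.mem_insert.1 ha' with rfl | ha'
      · exact absurd ⟨hd, hl⟩ ha
      · exact hF' B₁ (S.le_refl B₁) a' ha' hd hl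

theorem exists_le_extensions_decided (hA3 : S.A3) (hA4ii : S.A4ii) (hA6 : S.A6) (l : ℕ)
    (O : Set S.AR) (i : ℕ) (B : S.R) :
    ∃ B', S.le B' B ∧ S.r i B' = S.r i B ∧ ∀ a, S.IsDepth B a i → (∃ C, S.r l C = a) →
      S.extensions l a B' ⊆ O ∨ S.extensions l a B' ⊆ Oᶜ := by
  obtain ⟨B', hle, hr, hF⟩ :=
    exists_le_extensions_decided_finset hA3 hA6 l O i B (hA4ii (S.r i B)).toFinset
  exact ⟨B', hle, hr, fun a hd => hF a ((hA4ii _).mem_toFinset.2 hd.1) hd⟩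

theorem exists_fusion_limit (hA3 : S.A3) (hA4i : S.A4i) (hMC : S.MetricallyClosed)
    (B : ℕ → S.R) (hle : ∀ d, S.le (B (d + 1)) (B d))
    (hr : ∀ d, S.r d (B (d + 1)) = S.r d (B d)) :
    ∃ L, ∀ d, S.le L (B d) ∧ ∀ j ≤ d, S.r j L = S.r j (B d) := by
  have stab : ∀ j d, j ≤ d → S.r j (B d) = S.r j (B j) := by
    intro j d hjd
    induction d, hjd using Nat.le_induction with
    | base => rfl
    | succ d hjd ih => exact (r_eq_of_r_eq_of_le hA3 (hr d) hjd).trans ih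
  have anti : ∀ d e, d ≤ e → S.le (B e) (B d) := by
    intro d e hde
    induction e, hde using Nat.le_induction with
    | base => exact S.le_refl _
    | succ e _ ih => exact S.le_trans _ _ _ (hle e) ih
  obtain ⟨L, hL⟩ := hMC (fun j => S.r j (B j)) fun d => ⟨B d, fun j hj => stab j d hj⟩
  refine ⟨L, fun d => ⟨(hA4i L (B d)).2 fun j => ?_, fun j hj => (hL j).trans (stab j d hj).symm⟩⟩
  obtain ⟨m, hm⟩ := (hA4i _ _).1 (anti d (max j d) (le_max_right j d)) j
  rw [stab j _ (le_max_left j d)] at hm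
  exact ⟨m, (hL j).symm ▸ hm⟩

theorem exists_le_forall_extensions_decided (hA3 : S.A3) (hA4i : S.A4i) (hA4ii : S.A4ii)
    (hA6 : S.A6) (hMC : S.MetricallyClosed) (l : ℕ) (O : Set S.AR) (A : S.R) :
    ∃ L, S.le L A ∧ ∀ a ∈ S.ARk l L, S.extensions l a L ⊆ O ∨ S.extensions l a L ⊆ Oᶜ := by
  choose next hle hr hdec using exists_le_extensions_decided hA3 hA4ii hA6 l O
  let B : ℕ → S.R := fun d => Nat.rec (motive := fun _ => S.R) A next d
  obtain ⟨L, hL⟩ :=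
    exists_fusion_limit hA3 hA4i hMC B (fun d => hle d (B d)) (fun d => hr d (B d))
  refine ⟨L, (hL 0).1, ?_⟩
  rintro _ ⟨C, hC, rfl⟩
  obtain ⟨d, hd⟩ := (hA4i C L).1 hC l
  set e := S.depth L (S.r l C)
  have hBe : S.IsDepth (B e) (S.r l C) e := (isDepth_depth hd).congr (hL e).2
  exact (hdec e (B e) _ hBe ⟨C, rfl⟩).imp (extensions_mono (hL (e + 1)).1).trans
    (extensions_mono (hL (e + 1)).1).trans

theorem exists_le_ARk_subset_or_subset_compl (hA1 : S.A1) (hA3 : S.A3) (hA4i : S.A4i)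
    (hA4ii : S.A4ii) (hA6 : S.A6) (hMC : S.MetricallyClosed) (k : ℕ) (O : Set S.AR) (A : S.R) :
    ∃ B, S.le B A ∧ (S.ARk k B ⊆ O ∨ S.ARk k B ⊆ Oᶜ) := by
  induction k generalizing O A with
  | zero =>
    have hA : S.ARk 0 A ⊆ {S.r 0 A} := by
      rintro _ ⟨C, -, rfl⟩
      exact hA1 C A
    by_cases h : S.r 0 A ∈ O
    · exact ⟨A, S.le_refl A, .inl (hA.trans (Set.singleton_subset_iff.2 h))⟩
    · exact ⟨A, S.le_refl A, .inr (hA.trans (Set.singleton_subset_iff.2 h))⟩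
  | succ k ih =>
    obtain ⟨L, hLA, hL⟩ := exists_le_forall_extensions_decided hA3 hA4i hA4ii hA6 hMC k O A
    obtain ⟨B, hBL, hB⟩ := ih {a | S.extensions k a L ⊆ O} L
    refine ⟨B, S.le_trans _ _ _ hBL hLA, ?_⟩
    have hext : ∀ C, S.le C B → S.r (k + 1) C ∈ S.extensions k (S.r k C) L :=
      fun C hC => ⟨C, ⟨S.le_trans _ _ _ hC hBL, k, rfl⟩, rfl⟩
    rcases hB with hB | hB
    · exact .inl fun _ ⟨C, hC, hCb⟩ => hCb ▸ hB ⟨C, hC, rfl⟩ (hext C hC)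
    · refine .inr fun _ ⟨C, hC, hCb⟩ => hCb ▸ ?_
      exact (hL _ (ARk_mono hBL ⟨C, hC, rfl⟩)).resolve_left (hB ⟨C, hC, rfl⟩) (hext C hC)

theorem exists_le_ARk_monochromatic (hA1 : S.A1) (hA3 : S.A3) (hA4i : S.A4i) (hA4ii : S.A4ii)
    (hA6 : S.A6) (hMC : S.MetricallyClosed) {α : Type*} (k : ℕ) (c : S.AR → α) (T : Finset α)
    (A : S.R) (hT : ∀ a ∈ S.ARk k A, c a ∈ T) :
    ∃ B, S.le B A ∧ ∃ i, ∀ a ∈ S.ARk k B, c a = i := by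
  classical
  induction T using Finset.induction_on generalizing A with
  | empty => exact absurd (hT _ (r_mem_ARk k A)) (Finset.notMem_empty _)
  | insert i T _ ih =>
    obtain ⟨B, hBA, hB | hB⟩ :=
      exists_le_ARk_subset_or_subset_compl hA1 hA3 hA4i hA4ii hA6 hMC k (c ⁻¹' {i}) A
    · exact ⟨B, hBA, i, hB⟩
    · obtain ⟨B', hB'B, hB'⟩ := ih B fun a ha =>
        (Finset.mem_insert.1 (hT a (ARk_mono hBA ha))).resolve_left (hB ha)
      exact ⟨B', S.le_trans _ _ _ hB'B hBA, hB'⟩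

theorem r_mem_ARk_of_lefin (hA3 : S.A3) (hA5 : S.A5) {k n : ℕ} {B C : S.R}
    (h : S.lefin (S.r k C) (S.r n B)) : S.r k C ∈ S.ARk k B := by
  obtain ⟨D, hDB, j, hj⟩ := (hA5 _ B _ (isDepth_depth h)).1 B ⟨S.le_refl B, _, rfl⟩
  obtain rfl := (hA3 D C j k hj).1
  exact ⟨D, hDB, hj⟩

theorem exists_isDepth_monochromatic (hA1 : S.A1) (hA3 : S.A3) (hA4i : S.A4i) (hA4ii : S.A4ii)
    (hA5 : S.A5) (hA6 : S.A6) (hMC : S.MetricallyClosed) {α : Type*} [Finite α]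
    (c : ℕ → S.AR → α) (k n : ℕ) (A : S.R) :
    ∃ m b, b ∈ S.ARk n A ∧ S.IsDepth A b m ∧
      ∃ i, ∀ a ∈ S.ARk k A, S.IsDepth A a m → S.lefin a b → c m a = i := by
  have := Fintype.ofFinite α
  obtain ⟨B, hBA, i, hB⟩ := exists_le_ARk_monochromatic hA1 hA3 hA4i hA4ii hA6 hMC k
    (fun a => c (S.depth A a) a) Finset.univ A fun _ _ => Finset.mem_univ _
  obtain ⟨d, hd⟩ := (hA4i B A).1 hBA n
  refine ⟨_, _, ⟨B, hBA, rfl⟩, isDepth_depth hd, i, ?_⟩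
  rintro _ ⟨C, -, rfl⟩ hm hCB
  rw [← hm.depth_eq]
  exact hB _ (r_mem_ARk_of_lefin hA3 hA5 hCB)

end RSpace

/-- Abstract version of the finite Ramsey theorem: for some `m`, every finite coloring of
`AR_k^m(A)` (the `k`-th approximations of elements below `A` of depth `m` in `A`) is
constant on `AR_k^m(A, b) = {a ∈ AR_k^m(A) : a ≤_fin b}` for some `b ∈ AR_n^m(A)`. -/
theorem abstract_finite_ramsey (S : RSpace) (hS : S.Axioms) (k n s : ℕ) (A : S.R) :
    ∃ m : ℕ, ∀ c : S.AR → Fin s,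
      ∃ b : S.AR, (∃ C, S.le C A ∧ S.r n C = b) ∧ S.IsDepth A b m ∧
        ∀ a₁ a₂ : S.AR,
          ((∃ C, S.le C A ∧ S.r k C = a₁) ∧ S.IsDepth A a₁ m ∧ S.lefin a₁ b) →
          ((∃ C, S.le C A ∧ S.r k C = a₂) ∧ S.IsDepth A a₂ m ∧ S.lefin a₂ b) →
          c a₁ = c a₂ := by
  obtain ⟨hA1, -, hA3, hA4i, hA4ii, hA5, hA6, hMC⟩ := hS
  by_contra! hbad
  choose c hc using hbad
  obtain ⟨m, b, hb, hbm, i, hi⟩ :=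
    RSpace.exists_isDepth_monochromatic hA1 hA3 hA4i hA4ii hA5 hA6 hMC c k n A
  obtain ⟨a₁, a₂, ⟨ha₁, ha₁m, ha₁b⟩, ⟨ha₂, ha₂m, ha₂b⟩, hne⟩ := hc m b hb hbm
  exact hne ((hi a₁ ha₁ ha₁m ha₁b).trans (hi a₂ ha₂ ha₂m ha₂b).symm)
end
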